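/- arXiv:math/0106021 — 3 statements merged into one kernel-verified Lean document; each statement's English description precedes it below -/
import Mathlib

section
/- Let A be an n×n quaternionic Hermitian matrix, Ā its entrywise quaternionic conjugate, and u ∈ ℍⁿ a quaternionic eigenvector of Ā with real eigenvalue μ, i.e., Ā u = μ u. Then, viewing A and u inside the Cayley–Dickson octonions, the octonionic vector ℓu (componentwise left multiplication by ℓ = (0,1)) satisfies A (ℓu) = μ (ℓu). -/
open Quaternion

noncomputable section

/-- The octonions as the Cayley–Dickson double of the quaternions: pairs `(a, b)`. -/
abbrev Oct : Type := ℍ[ℝ] × ℍ[ℝ]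

/-- Cayley–Dickson multiplication: `(a,b)(c,d) = (ac − d̄b, da + bc̄)`. -/
def omul (x y : Oct) : Oct :=
  (x.1 * y.1 - star y.2 * x.2, y.2 * x.1 + x.2 * star y.1)

/-- Octonionic conjugation: `(a,b)* = (ā, −b)`. -/
def oconj (x : Oct) : Oct := (star x.1, -x.2)

/-- The octonionic unit `1 = (1,0)`. -/
def oone : Oct := ((1 : ℍ[ℝ]), (0 : ℍ[ℝ]))

/-- The Cayley–Dickson unit `ℓ = (0,1)`. -/
def oell : Oct := ((0 : ℍ[ℝ]), (1 : ℍ[ℝ]))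

/-- The embedding of the quaternions into the octonions, `q ↦ (q,0)`. -/
def iotaO (q : ℍ[ℝ]) : Oct := (q, (0 : ℍ[ℝ]))

/-- Real part of an octonion. -/
def oRe (x : Oct) : ℝ := x.1.re

/-- If `A` is quaternionic Hermitian and `Ā u = μ u` with `μ` real, then over the
octonions `A (ℓu) = μ (ℓu)`. -/
theorem ell_eigenvector (n : ℕ) (A : Matrix (Fin n) (Fin n) ℍ[ℝ])
    (hA : A.conjTranspose = A) (u : Fin n → ℍ[ℝ]) (μ : ℝ)
    (hu : (A.map star).mulVec u = μ • u) :
    ∀ i, ∑ j, omul (iotaO (A i j)) (omul oell (iotaO (u j)))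
      = μ • omul oell (iotaO (u i)) := by
  intro i
  have key : ∑ j, star (u j) * A i j = μ • star (u i) := by
    have h := congrArg star (congrFun hu i)
    simpa [Matrix.mulVec, dotProduct, Matrix.map_apply, star_sum, star_mul,
      star_star] using h
  have e1 : ∀ j, omul (iotaO (A i j)) (omul oell (iotaO (u j)))
      = ((0 : ℍ[ℝ]), star (u j) * A i j) := by
    intro j; simp [omul, oell, iotaO]
  have e2 : μ • omul oell (iotaO (u i)) = ((0 : ℍ[ℝ]), μ • star (u i)) := by
    simp [omul, oell, iotaO, Prod.smul_def]
  rw [e2]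
  rw [Finset.sum_congr rfl (fun j _ => e1 j), Prod.ext_iff]
  constructor
  · simp [Prod.fst_sum]
  · simpa [Prod.snd_sum] using key
end
end

section
/- Let 𝕆 be the octonions and v ∈ 𝕆³ a column vector with v† v = 1 (a real scalar). Then the Hermitian matrix A = v v† satisfies tr(A) = 1 and σ(A) := ½((tr A)² − tr(A²)) = 0, where A² is computed with the octonion product. -/
open Quaternion

noncomputable section

def onorm (x : Oct) : ℝ := normSq x.1 + normSq x.2

lemma oconj_omul (x y : Oct) : oconj (omul x y) = omul (oconj y) (oconj x) := by
  unfold omul oconj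
  ext <;> simp

lemma oconj_oconj (x : Oct) : oconj (oconj x) = x := by
  unfold oconj; simp

lemma omul_oconj_self (x : Oct) : omul x (oconj x) = onorm x • oone := by
  unfold omul oconj oone onorm
  ext <;>
    simp [Quaternion.re_mul, Quaternion.imI_mul, Quaternion.imJ_mul,
      Quaternion.imK_mul, normSq_def'] <;> ring

lemma oconj_omul_self (x : Oct) : omul (oconj x) x = onorm x • oone := by
  unfold omul oconj oone onorm
  ext <;>
    simp [Quaternion.re_mul, Quaternion.imI_mul, Quaternion.imJ_mul,
      Quaternion.imK_mul, normSq_def'] <;> ring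

lemma onorm_omul (x y : Oct) : onorm (omul x y) = onorm x * onorm y := by
  unfold omul onorm
  simp [normSq_def', Quaternion.re_mul, Quaternion.imI_mul, Quaternion.imJ_mul,
    Quaternion.imK_mul]
  ring

lemma onorm_oconj (x : Oct) : onorm (oconj x) = onorm x := by
  unfold onorm oconj; simp

lemma okey (x y : Oct) : omul (omul x (oconj y)) (omul y (oconj x)) =
    (onorm x * onorm y) • oone := by
  have h : omul y (oconj x) = oconj (omul x (oconj y)) := by
    rw [oconj_omul, oconj_oconj]
  rw [h, omul_oconj_self, onorm_omul, onorm_oconj]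

lemma omul_oone_oone : omul oone oone = oone := by
  unfold omul oone; simp

/-- If `v ∈ 𝕆³` satisfies `v† v = 1`, then `A = v v†` has `tr A = 1` and
`σ(A) = ½((tr A)² − tr(A²)) = 0`. -/
theorem trace_and_sigma_of_projector (v : Fin 3 → Oct)
    (hv : ∑ i, omul (oconj (v i)) (v i) = oone) :
    (∑ i, omul (v i) (oconj (v i)) = oone) ∧
    ((1 / 2 : ℝ) •
        (omul (∑ i, omul (v i) (oconj (v i))) (∑ i, omul (v i) (oconj (v i))) -
          ∑ i, ∑ j, omul (omul (v i) (oconj (v j))) (omul (v j) (oconj (v i))))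
      = 0) := by
  have hn : ∑ i, onorm (v i) = 1 := by
    have hsum : ∑ i, omul (oconj (v i)) (v i) = (∑ i, onorm (v i)) • oone := by
      rw [Finset.sum_smul]
      exact Finset.sum_congr rfl fun i _ => oconj_omul_self (v i)
    have h1 : (∑ i, onorm (v i)) • oone = oone := hsum.symm.trans hv
    have h2 := congrArg (fun z : Oct => z.1.re) h1
    simpa [oone] using h2
  have h1 : ∑ i, omul (v i) (oconj (v i)) = oone := by
    rw [show (∑ i, omul (v i) (oconj (v i))) = (∑ i, onorm (v i)) • oone by
      rw [Finset.sum_smul]; exact Finset.sum_congr rfl fun i _ => omul_oconj_self (v i),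
      hn, one_smul]
  refine ⟨h1, ?_⟩
  rw [h1, omul_oone_oone]
  have h2 : ∑ i, ∑ j, omul (omul (v i) (oconj (v j))) (omul (v j) (oconj (v i))) = oone := by
    have : ∀ i j : Fin 3, omul (omul (v i) (oconj (v j))) (omul (v j) (oconj (v i)))
        = (onorm (v i) * onorm (v j)) • oone := fun i j => okey (v i) (v j)
    simp_rw [this, ← Finset.sum_smul, ← Finset.mul_sum, ← Finset.sum_mul, hn, one_mul, one_smul]
  rw [h2, sub_self, smul_zero]
end
end

section
/- In the Cayley–Dickson octonions over ℍ, for any quaternionic vector u ∈ ℍⁿ and any quaternionic vector x ∈ ℍⁿ, the octonionic matrix (ℓu)(ℓu)† satisfies [(ℓu)(ℓu)†](ℓx) = ℓ ((u u†) x), where ℓx has components ℓ·xᵢ and (u u†) x is computed entirely within the quaternions. -/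
open Quaternion

noncomputable section

/-- For quaternionic vectors `u, x ∈ ℍⁿ`:
`[(ℓu)(ℓu)†](ℓx) = ℓ((u u†) x)`, the latter computed within the quaternions. -/
theorem ell_projector (n : ℕ) (u x : Fin n → ℍ[ℝ]) :
    ∀ i, ∑ j, omul
        (omul (omul oell (iotaO (u i))) (oconj (omul oell (iotaO (u j)))))
        (omul oell (iotaO (x j)))
      = omul oell (iotaO (∑ j, (u i * star (u j)) * x j)) := by
  intro i
  have h : ∀ j, omul
        (omul (omul oell (iotaO (u i))) (oconj (omul oell (iotaO (u j)))))
        (omul oell (iotaO (x j)))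
      = ((0 : ℍ[ℝ]), star (x j) * (u j * star (u i))) := by
    intro j
    simp [omul, oconj, iotaO, oell, mul_assoc]
  calc ∑ j, omul
        (omul (omul oell (iotaO (u i))) (oconj (omul oell (iotaO (u j)))))
        (omul oell (iotaO (x j)))
      = ∑ j : Fin n, ((0 : ℍ[ℝ]), star (x j) * (u j * star (u i))) :=
        Finset.sum_congr rfl fun j _ => h j
    _ = ((0 : ℍ[ℝ]), ∑ j, star (x j) * (u j * star (u i))) := by
        rw [← prod_mk_sum]; simp
    _ = omul oell (iotaO (∑ j, (u i * star (u j)) * x j)) := by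
        simp [omul, iotaO, oell, star_sum, star_mul, mul_assoc]
end
end
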